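/- arXiv:1205.3086 — 2 statements merged into one kernel-verified Lean document; each statement's English description precedes it below -/
import Mathlib

section
/- Let d be a positive divisor of N with gcd(d, N/d) = 1. Then the restriction of ψ_d² to P_d ∩ Γ₀(n,N) is a group homomorphism onto Γ₀(n−1, N/d)^± whose kernel is exactly U_d ∩ Γ₀(n,N); that is, the sequence 1 → U_d ∩ Γ₀(n,N) → P_d ∩ Γ₀(n,N) → Γ₀(n−1, N/d)^± → 1 induced by ψ_d² is exact. -/
open Matrix

/-- `g_x` over `ℤ`: the identity matrix with its `(1,2)` entry replaced by `x`. -/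
def gmatZ (n : ℕ) (x : ℤ) : Matrix (Fin (n + 2)) (Fin (n + 2)) ℤ :=
  1 + x • Matrix.single 0 1 1

/-- Conjugation `g_d s g_d⁻¹` (note `g_d⁻¹ = g_{-d}`). -/
def conjd (n : ℕ) (d : ℤ) (s : Matrix (Fin (n + 2)) (Fin (n + 2)) ℤ) :
    Matrix (Fin (n + 2)) (Fin (n + 2)) ℤ :=
  gmatZ n d * s * gmatZ n (-d)

/-- `S₀(m+1,N)^±`: integer matrices with nonzero determinant relatively prime to `pN`
whose first row is `≡ (∗,0,…,0) (mod N)`. -/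
def S0pm (p N : ℕ) {m : ℕ} : Set (Matrix (Fin (m + 1)) (Fin (m + 1)) ℤ) :=
  {s | s.det ≠ 0 ∧ Int.gcd s.det (p * N) = 1 ∧ ∀ j : Fin (m + 1), j ≠ 0 → (N : ℤ) ∣ s 0 j}

/-- `ψ_d¹(s)`: the `(1,1)` entry of `g_d s g_d⁻¹`. -/
def psi1 (n : ℕ) (d : ℤ) (s : Matrix (Fin (n + 2)) (Fin (n + 2)) ℤ) : ℤ :=
  conjd n d s 0 0

/-- `ψ_d²(s)`: the lower-right `(n-1)×(n-1)` block of `g_d s g_d⁻¹`. -/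
def psi2 (n : ℕ) (d : ℤ) (s : Matrix (Fin (n + 2)) (Fin (n + 2)) ℤ) :
    Matrix (Fin (n + 1)) (Fin (n + 1)) ℤ :=
  Matrix.of fun i j => conjd n d s i.succ j.succ

/-- `Γ₀(m+1,N)`: integer matrices of determinant `1` with first row `≡ (∗,0,…,0) (mod N)`. -/
def Gamma0Z (N : ℕ) {m : ℕ} : Set (Matrix (Fin (m + 1)) (Fin (m + 1)) ℤ) :=
  {g | g.det = 1 ∧ ∀ j : Fin (m + 1), j ≠ 0 → (N : ℤ) ∣ g 0 j}

/-- `Γ₀(m+1,N)^±`: integer matrices of determinant `±1` with first row `≡ (∗,0,…,0) (mod N)`. -/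
def Gamma0pmZ (N : ℕ) {m : ℕ} : Set (Matrix (Fin (m + 1)) (Fin (m + 1)) ℤ) :=
  {g | (g.det = 1 ∨ g.det = -1) ∧ ∀ j : Fin (m + 1), j ≠ 0 → (N : ℤ) ∣ g 0 j}

/-- `P_d` (for integer matrices with nonzero determinant): `g_d s g_d⁻¹` has first row
zero away from the `(1,1)` entry. -/
def memPd (n : ℕ) (d : ℤ) (s : Matrix (Fin (n + 2)) (Fin (n + 2)) ℤ) : Prop :=
  s.det ≠ 0 ∧ ∀ j : Fin (n + 2), j ≠ 0 → conjd n d s 0 j = 0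

/-- `U_d = g_d⁻¹ U₀ g_d` (integral points): `g_d s g_d⁻¹` agrees with the identity matrix
except in the first column below the `(1,1)` entry. -/
def memUd (n : ℕ) (d : ℤ) (s : Matrix (Fin (n + 2)) (Fin (n + 2)) ℤ) : Prop :=
  ∀ i j : Fin (n + 2), ¬(j = 0 ∧ i ≠ 0) →
    conjd n d s i j = (1 : Matrix (Fin (n + 2)) (Fin (n + 2)) ℤ) i j

/-! Conjugating by `g_d` turns `P_d` into the block lower triangular matrices `[[a, 0], [c, g]]`,
on which `ψ_d²` is the block `g`; it is multiplicative and `a · det g = det s = 1`, so `g` is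
invertible. The congruences come from the first row `(s₀₀ + d s₁₀, s₀₁ + …, s₀ⱼ + d s₁ⱼ)` of
`g_d s g_d⁻¹`: its vanishing for `j ≥ 2` with `N = d (N/d) ∣ s₀ⱼ` forces `N/d ∣ s₁ⱼ`.
Conversely `[[det g, 0], [c, g]]` is pulled back to `Γ₀(n,N)` by choosing `c₀` with
`d c₀ ≡ det g - g₀₀ (mod N/d)`, which is possible because `d` and `N/d` are coprime. -/

lemma Fin.succ_ne_one_of_ne_zero {m : ℕ} {j : Fin (m + 1)} (hj : j ≠ 0) : j.succ ≠ 1 := by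
  rwa [← Fin.succ_zero_eq_one, Ne, Fin.succ_inj]

lemma gmatZ_eq_transvection (n : ℕ) (x : ℤ) : gmatZ n x = transvection 0 1 x := by
  rw [gmatZ, transvection, smul_single, smul_eq_mul, mul_one]

lemma gmatZ_mul_gmatZ (n : ℕ) (x y : ℤ) : gmatZ n x * gmatZ n y = gmatZ n (x + y) := by
  simp only [gmatZ_eq_transvection]
  exact transvection_mul_transvection_same _ _ zero_ne_one _ _

lemma det_gmatZ (n : ℕ) (x : ℤ) : (gmatZ n x).det = 1 := by
  rw [gmatZ_eq_transvection]
  exact det_transvection_of_ne _ _ zero_ne_one _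

section Conjugation

variable {n : ℕ} {d : ℤ}

lemma conjd_mul (s t : Matrix (Fin (n + 2)) (Fin (n + 2)) ℤ) :
    conjd n d (s * t) = conjd n d s * conjd n d t := by
  have hinv : gmatZ n (-d) * gmatZ n d = 1 := by
    rw [gmatZ_mul_gmatZ, neg_add_cancel, gmatZ_eq_transvection, transvection_zero]
  simp only [conjd, Matrix.mul_assoc]
  rw [← Matrix.mul_assoc (gmatZ n (-d)) (gmatZ n d), hinv, Matrix.one_mul]

lemma det_conjd (s : Matrix (Fin (n + 2)) (Fin (n + 2)) ℤ) : (conjd n d s).det = s.det := by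
  rw [conjd, det_mul, det_mul, det_gmatZ, det_gmatZ, one_mul, mul_one]

lemma conjd_conjd_neg (C : Matrix (Fin (n + 2)) (Fin (n + 2)) ℤ) :
    conjd n d (conjd n (-d) C) = C := by
  simp only [conjd, Matrix.mul_assoc, neg_neg]
  rw [← Matrix.mul_assoc (gmatZ n d), gmatZ_mul_gmatZ, add_neg_cancel,
    gmatZ_eq_transvection, transvection_zero, Matrix.one_mul, Matrix.mul_one]

lemma conjd_apply_of_ne {s : Matrix (Fin (n + 2)) (Fin (n + 2)) ℤ} {i j : Fin (n + 2)}
    (hi : i ≠ 0) (hj : j ≠ 1) : conjd n d s i j = s i j := by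
  simp only [conjd, gmatZ_eq_transvection]
  rw [mul_transvection_apply_of_ne _ _ _ _ hj, transvection_mul_apply_of_ne _ _ _ _ hi]

lemma conjd_zero_apply_of_ne_one {s : Matrix (Fin (n + 2)) (Fin (n + 2)) ℤ} {j : Fin (n + 2)}
    (hj : j ≠ 1) : conjd n d s 0 j = s 0 j + d * s 1 j := by
  simp only [conjd, gmatZ_eq_transvection]
  rw [mul_transvection_apply_of_ne _ _ _ _ hj, transvection_mul_apply_same]

lemma conjd_zero_one (s : Matrix (Fin (n + 2)) (Fin (n + 2)) ℤ) :
    conjd n d s 0 1 = s 0 1 + d * s 1 1 - d * (s 0 0 + d * s 1 0) := by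
  simp only [conjd, gmatZ_eq_transvection, mul_transvection_apply_same,
    transvection_mul_apply_same]
  ring

end Conjugation

lemma Matrix.det_eq_mul_det_submatrix_succ {R : Type*} [CommRing R] {m : ℕ}
    (A : Matrix (Fin (m + 1)) (Fin (m + 1)) R) (h : ∀ j, j ≠ 0 → A 0 j = 0) :
    A.det = A 0 0 * (A.submatrix Fin.succ Fin.succ).det := by
  rw [det_succ_row_zero, Fin.sum_univ_succ, Finset.sum_eq_zero fun j _ => by
    rw [h j.succ j.succ_ne_zero, mul_zero, zero_mul]]
  simp [Fin.succAbove_zero]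

/-- The block matrix `[[a, 0], [c, g]]`. -/
def lowerBlockMatrix {R : Type*} [Zero R] {m : ℕ} (a : R) (c : Fin m → R)
    (g : Matrix (Fin m) (Fin m) R) : Matrix (Fin (m + 1)) (Fin (m + 1)) R :=
  Matrix.of (Fin.cons (Fin.cons a 0) fun i => Fin.cons (c i) (g i))

section LowerBlockMatrix

variable {R : Type*} {m : ℕ} (a : R) (c : Fin m → R) (g : Matrix (Fin m) (Fin m) R)

@[simp]
lemma lowerBlockMatrix_zero_zero [Zero R] : lowerBlockMatrix a c g 0 0 = a := rfl

@[simp]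
lemma lowerBlockMatrix_zero_succ [Zero R] (j : Fin m) : lowerBlockMatrix a c g 0 j.succ = 0 :=
  rfl

@[simp]
lemma lowerBlockMatrix_succ_zero [Zero R] (i : Fin m) : lowerBlockMatrix a c g i.succ 0 = c i :=
  rfl

@[simp]
lemma lowerBlockMatrix_succ_succ [Zero R] (i j : Fin m) :
    lowerBlockMatrix a c g i.succ j.succ = g i j :=
  rfl

lemma det_lowerBlockMatrix [CommRing R] : (lowerBlockMatrix a c g).det = a * g.det := by
  rw [det_eq_mul_det_submatrix_succ _ fun j hj => by
    obtain ⟨j, rfl⟩ := Fin.exists_succ_eq.mpr hj; rfl]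
  rfl

end LowerBlockMatrix

section Psi2

variable {n : ℕ} {d : ℤ}

lemma psi2_mul (s : Matrix (Fin (n + 2)) (Fin (n + 2)) ℤ)
    {t : Matrix (Fin (n + 2)) (Fin (n + 2)) ℤ} (ht : ∀ j, j ≠ 0 → conjd n d t 0 j = 0) :
    psi2 n d (s * t) = psi2 n d s * psi2 n d t := by
  ext i j
  simp only [psi2, of_apply, conjd_mul, mul_apply, Fin.sum_univ_succ,
    ht j.succ j.succ_ne_zero, mul_zero, zero_add]

lemma conjd_zero_zero_mul_det_psi2 {s : Matrix (Fin (n + 2)) (Fin (n + 2)) ℤ}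
    (hs : ∀ j, j ≠ 0 → conjd n d s 0 j = 0) : conjd n d s 0 0 * (psi2 n d s).det = s.det := by
  rw [← det_conjd (d := d), det_eq_mul_det_submatrix_succ _ hs]
  rfl

lemma psi2_mem_Gamma0pmZ {N M : ℕ} (hd : d ≠ 0) (hNd : (N : ℤ) = d * M)
    {s : Matrix (Fin (n + 2)) (Fin (n + 2)) ℤ} (hs : memPd n d s) (hsΓ : s ∈ Gamma0Z N) :
    psi2 n d s ∈ Gamma0pmZ M := by
  refine ⟨Int.isUnit_iff.mp (IsUnit.of_mul_eq_one_right (conjd n d s 0 0) ?_), fun j hj => ?_⟩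
  · rw [conjd_zero_zero_mul_det_psi2 hs.2, hsΓ.1]
  have hj1 : (j.succ : Fin (n + 2)) ≠ 1 := Fin.succ_ne_one_of_ne_zero hj
  have hrow : s 0 j.succ + d * s 1 j.succ = 0 := by
    rw [← conjd_zero_apply_of_ne_one hj1]
    exact hs.2 _ j.succ_ne_zero
  have hdvd : d * M ∣ d * s 1 j.succ := by
    rw [← hNd, eq_neg_of_add_eq_zero_right hrow, dvd_neg]
    exact hsΓ.2 _ j.succ_ne_zero
  change (M : ℤ) ∣ conjd n d s (Fin.succ 0) j.succ
  rw [conjd_apply_of_ne (Fin.succ_ne_zero 0) hj1, Fin.succ_zero_eq_one]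
  exact (mul_dvd_mul_iff_left hd).mp hdvd

lemma exists_memPd_mem_Gamma0Z_psi2_eq {N M : ℕ} (hcop : IsCoprime d M)
    (hNd : (N : ℤ) = d * M) {g : Matrix (Fin (n + 1)) (Fin (n + 1)) ℤ}
    (hg : g ∈ Gamma0pmZ M) : ∃ s, memPd n d s ∧ s ∈ Gamma0Z N ∧ psi2 n d s = g := by
  obtain ⟨u, v, huv⟩ := hcop
  obtain ⟨hgdet, hgrow⟩ := hg
  set C := lowerBlockMatrix g.det (fun _ => u * (g.det - g 0 0)) g
  have hC : conjd n d (conjd n (-d) C) = C := conjd_conjd_neg C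
  have hdet : (conjd n (-d) C).det = 1 := by
    rw [← det_conjd (d := d), hC, det_lowerBlockMatrix]
    rcases hgdet with h | h <;> rw [h] <;> norm_num
  refine ⟨conjd n (-d) C, ⟨by rw [hdet]; exact one_ne_zero, fun j hj => ?_⟩, ⟨hdet, ?_⟩, ?_⟩
  · obtain ⟨j, rfl⟩ := Fin.exists_succ_eq.mpr hj
    rw [hC]; rfl
  · intro j hj
    obtain ⟨j, rfl⟩ := Fin.exists_succ_eq.mpr hj
    rw [hNd]
    rcases eq_or_ne j 0 with rfl | hj0
    · rw [Fin.succ_zero_eq_one, conjd_zero_one, ← Fin.succ_zero_eq_one]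
      simp only [C, lowerBlockMatrix_zero_zero, lowerBlockMatrix_zero_succ,
        lowerBlockMatrix_succ_zero, lowerBlockMatrix_succ_succ]
      -- `c₀ = u (det g - g₀₀)` with `u d + v M = 1`, so `det g - g₀₀ - d c₀ = v M (det g - g₀₀)`
      exact ⟨(g.det - g 0 0) * v, by linear_combination (g 0 0 - g.det) * d * huv⟩
    · rw [conjd_zero_apply_of_ne_one (Fin.succ_ne_one_of_ne_zero hj0), ← Fin.succ_zero_eq_one]
      simp only [C, lowerBlockMatrix_zero_succ, lowerBlockMatrix_succ_succ]
      rw [zero_add, neg_mul, dvd_neg]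
      exact mul_dvd_mul_left _ (hgrow j hj0)
  · ext i j
    change conjd n d (conjd n (-d) C) i.succ j.succ = g i j
    rw [hC]; rfl

lemma psi2_eq_one_iff_memUd {s : Matrix (Fin (n + 2)) (Fin (n + 2)) ℤ}
    (hs : ∀ j, j ≠ 0 → conjd n d s 0 j = 0) (hdet : s.det = 1) :
    psi2 n d s = 1 ↔ memUd n d s := by
  constructor
  · intro h1 i j hij
    have h00 : conjd n d s 0 0 = 1 := by
      simpa [h1] using conjd_zero_zero_mul_det_psi2 hs |>.trans hdet
    cases i using Fin.cases with
    | zero =>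
      cases j using Fin.cases with
      | zero => rw [h00, one_apply_eq]
      | succ j => rw [hs _ j.succ_ne_zero, one_apply_ne (Fin.succ_ne_zero j).symm]
    | succ i =>
      cases j using Fin.cases with
      | zero => exact absurd ⟨rfl, i.succ_ne_zero⟩ hij
      | succ j =>
        change psi2 n d s i j = _
        rw [h1]; simp only [one_apply, Fin.succ_inj]
  · intro hU
    ext i j
    change conjd n d s i.succ j.succ = _
    rw [hU _ _ fun h => j.succ_ne_zero h.1]; simp only [one_apply, Fin.succ_inj]

end Psi2

theorem stmt3_general (n N d : ℕ) (hd : 0 < d) (hdvd : d ∣ N)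
    (hgcd : Nat.gcd d (N / d) = 1) :
    (∀ s, memPd n (d : ℤ) s → s ∈ Gamma0Z N → ∀ t, memPd n (d : ℤ) t → t ∈ Gamma0Z N →
      psi2 n (d : ℤ) (s * t) = psi2 n (d : ℤ) s * psi2 n (d : ℤ) t) ∧
    (∀ s, memPd n (d : ℤ) s → s ∈ Gamma0Z N → psi2 n (d : ℤ) s ∈ Gamma0pmZ (N / d)) ∧
    (∀ g ∈ Gamma0pmZ (N / d), ∃ s, memPd n (d : ℤ) s ∧ s ∈ Gamma0Z N ∧
      psi2 n (d : ℤ) s = g) ∧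
    (∀ s, memPd n (d : ℤ) s → s ∈ Gamma0Z N →
      (psi2 n (d : ℤ) s = 1 ↔ memUd n (d : ℤ) s ∧ s ∈ Gamma0Z N)) := by
  have hNd : (N : ℤ) = d * (N / d : ℕ) := by
    rw [← Nat.cast_mul, Nat.mul_div_cancel' hdvd]
  have hcop : IsCoprime (d : ℤ) (N / d : ℕ) := Nat.isCoprime_iff_coprime.mpr hgcd
  refine ⟨fun s _ _ t ht _ => psi2_mul s ht.2,
    fun s hs hsΓ => psi2_mem_Gamma0pmZ (by exact_mod_cast hd.ne') hNd hs hsΓ,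
    fun g hg => exists_memPd_mem_Gamma0Z_psi2_eq hcop hNd hg,
    fun s hs hsΓ => ?_⟩
  rw [psi2_eq_one_iff_memUd hs.2 hsΓ.1, and_iff_left hsΓ]

/-- the sequence
`1 → U_d ∩ Γ₀(n,N) → P_d ∩ Γ₀(n,N) → Γ₀(n-1,N/d)^± → 1` induced by `ψ_d²` is exact:
`ψ_d²` restricted to `P_d ∩ Γ₀(n,N)` is a homomorphism onto `Γ₀(n-1,N/d)^±` with kernel
exactly `U_d ∩ Γ₀(n,N)`. -/
theorem stmt3 (p : ℕ) (hp : p.Prime) (n N d : ℕ) (hN : 0 < N) (hd : 0 < d) (hdvd : d ∣ N)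
    (hgcd : Nat.gcd d (N / d) = 1) :
    (∀ s, memPd n (d : ℤ) s → s ∈ Gamma0Z N → ∀ t, memPd n (d : ℤ) t → t ∈ Gamma0Z N →
      psi2 n (d : ℤ) (s * t) = psi2 n (d : ℤ) s * psi2 n (d : ℤ) t) ∧
    (∀ s, memPd n (d : ℤ) s → s ∈ Gamma0Z N → psi2 n (d : ℤ) s ∈ Gamma0pmZ (N / d)) ∧
    (∀ g ∈ Gamma0pmZ (N / d), ∃ s, memPd n (d : ℤ) s ∧ s ∈ Gamma0Z N ∧
      psi2 n (d : ℤ) s = g) ∧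
    (∀ s, memPd n (d : ℤ) s → s ∈ Gamma0Z N →
      (psi2 n (d : ℤ) s = 1 ↔ memUd n (d : ℤ) s ∧ s ∈ Gamma0Z N)) :=
  stmt3_general n N d hd hdvd hgcd
end

section
/- Let ℓ be a prime not dividing N and let d be a positive divisor of N with gcd(d, N/d) = 1. Let s = [[1,0,0],[a,ℓ,0],[b,c,ℓ₃]] be a lower-triangular integer matrix with ℓ₃ ∈ {1, ℓ}, and suppose ℓ does not divide ad + 1. Then there exists γ ∈ Γ₀(3,N) of the form [[A,B,0],[C,D,0],[0,0,1]] such that sγ ∈ P_d, and the matrix x = g_d s γ g_d⁻¹ ∈ P₀ satisfies x₁₁ = 1 and ψ₀²(x) = [[ℓ, 0],[−bℓd + c(ad+1), ℓ₃]]. -/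
/-!
With `u = ad + 1`, the choice `B = d (A - ℓ)`, `D = u + dC` makes `g_d s γ g_d⁻¹` lower triangular
with diagonal `(uA + ℓdC, ℓ, ℓ₃)` and the prescribed `ψ₀²`, while `det γ = uA + ℓdC`. So everything
reduces to `uA + ℓdC = 1` (possible since `u` is prime to `d` and, by hypothesis, to `ℓ`) together
with `N ∣ B`, i.e. `A ≡ ℓ (mod N/d)`, which the Chinese remainder theorem supplies because
`ℓd` is prime to `N/d`.
-/

open Matrix

/-- `Γ₀(3,N)`: 3×3 integer matrices of determinant `1` whose first row is
`≡ (∗,0,0) (mod N)`. -/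
def Gamma03 (N : ℕ) : Set (Matrix (Fin 3) (Fin 3) ℤ) :=
  {g | g.det = 1 ∧ (N : ℤ) ∣ g 0 1 ∧ (N : ℤ) ∣ g 0 2}

/-- `g_x`: the 3×3 identity matrix with its `(1,2)` entry replaced by `x`. -/
def g3 (x : ℤ) : Matrix (Fin 3) (Fin 3) ℤ := !![1, x, 0; 0, 1, 0; 0, 0, 1]

/-- Conjugation `g_d m g_d⁻¹` (note `g_d⁻¹ = g_{-d}`). -/
def conj3 (d : ℤ) (m : Matrix (Fin 3) (Fin 3) ℤ) : Matrix (Fin 3) (Fin 3) ℤ :=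
  g3 d * m * g3 (-d)

/-- `ψ₀²`: the lower-right 2×2 block. -/
def psi02 (m : Matrix (Fin 3) (Fin 3) ℤ) : Matrix (Fin 2) (Fin 2) ℤ :=
  !![m 1 1, m 1 2; m 2 1, m 2 2]

theorem exists_mul_add_mul_eq_one_and_dvd_sub {u m n : ℤ} (hum : IsCoprime u m)
    (hmn : IsCoprime m n) (t : ℤ) : ∃ A C : ℤ, u * A + m * C = 1 ∧ n ∣ A - t := by
  obtain ⟨A₀, C₀, h₀⟩ := hum
  obtain ⟨p, q, hpq⟩ := hmn
  -- shifting the Bézout pair along `(m, -u)` by `p (A₀ - t)` makes `A ≡ t (mod n)`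
  refine ⟨A₀ - m * p * (A₀ - t), C₀ + u * p * (A₀ - t), by linear_combination h₀,
    q * (A₀ - t), by linear_combination -(A₀ - t) * hpq⟩

theorem det_fin_three_blockDiag_one (A B C D : ℤ) :
    (!![A, B, 0; C, D, 0; 0, 0, 1] : Matrix (Fin 3) (Fin 3) ℤ).det = A * D - B * C := by
  simp [det_fin_three]

theorem conj3_mul_blockDiag {a b c d ℓ ℓ₃ A C : ℤ} (hAC : (a * d + 1) * A + ℓ * d * C = 1) :
    conj3 d (!![1, 0, 0; a, ℓ, 0; b, c, ℓ₃] *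
        !![A, d * (A - ℓ), 0; C, (a * d + 1) + d * C, 0; 0, 0, 1]) =
      !![1, 0, 0; a * A + ℓ * C, ℓ, 0; b * A + c * C, -b * ℓ * d + c * (a * d + 1), ℓ₃] := by
  simp only [conj3, g3, mul_fin_three]
  ext i j
  fin_cases i <;> fin_cases j <;> simp <;> first | ring1 | linear_combination hAC

theorem stmt10_general (N : ℕ) (ℓ : ℕ) (hℓ : ℓ.Prime) (hℓN : ¬ ℓ ∣ N)
    (d : ℕ) (hdvd : d ∣ N) (hgcd : Nat.gcd d (N / d) = 1)
    (ℓ₃ a b c : ℤ) (h3 : ℓ₃ = 1 ∨ ℓ₃ = (ℓ : ℤ)) (hnd : ¬ (ℓ : ℤ) ∣ (a * (d : ℤ) + 1)) :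
    ∃ A B C D : ℤ, ∃ x : Matrix (Fin 3) (Fin 3) ℤ,
      (!![A, B, 0; C, D, 0; 0, 0, 1] : Matrix (Fin 3) (Fin 3) ℤ) ∈ Gamma03 N ∧
      x = conj3 (d : ℤ)
        (!![1, 0, 0; a, (ℓ : ℤ), 0; b, c, ℓ₃] * !![A, B, 0; C, D, 0; 0, 0, 1]) ∧
      x.det ≠ 0 ∧ (∀ j : Fin 3, j ≠ 0 → x 0 j = 0) ∧
      x 0 0 = 1 ∧
      psi02 x = !![(ℓ : ℤ), 0;
        -b * (ℓ : ℤ) * (d : ℤ) + c * (a * (d : ℤ) + 1), ℓ₃] := by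
  have hℓprime : Prime (ℓ : ℤ) := Nat.prime_iff_prime_int.mp hℓ
  have hu : IsCoprime (a * d + 1) ((ℓ : ℤ) * d) :=
    (hℓprime.coprime_iff_not_dvd.mpr hnd).symm.mul_right ⟨1, -a, by ring⟩
  have hℓd : IsCoprime ((ℓ : ℤ) * d) ((N / d : ℕ) : ℤ) := by
    refine (hℓprime.coprime_iff_not_dvd.mpr ?_).mul_left (Nat.isCoprime_iff_coprime.mpr hgcd)
    rw [Int.natCast_dvd_natCast]
    exact fun h => hℓN (h.trans (Nat.div_dvd_of_dvd hdvd))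
  obtain ⟨A, C, hAC, hA⟩ := exists_mul_add_mul_eq_one_and_dvd_sub hu hℓd ℓ
  have hN : (N : ℤ) ∣ d * (A - ℓ) := by
    rw [← Nat.mul_div_cancel' hdvd, Nat.cast_mul]
    exact mul_dvd_mul_left _ hA
  have hℓℓ₃ : (ℓ : ℤ) * ℓ₃ ≠ 0 :=
    mul_ne_zero hℓprime.ne_zero (by rcases h3 with rfl | rfl <;> simp [hℓ.ne_zero])
  refine ⟨A, d * (A - ℓ), C, a * d + 1 + d * C, _, ⟨?_, by simpa using hN, by simp⟩, rfl, ?_⟩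
  · rw [det_fin_three_blockDiag_one]; linear_combination hAC
  rw [conj3_mul_blockDiag hAC]
  refine ⟨by simpa [det_fin_three] using hℓℓ₃, fun j hj => ?_, by simp, ?_⟩
  · fin_cases j <;> simp_all
  · ext i j; fin_cases i <;> fin_cases j <;> simp [psi02]

/-- case 3 of Theorem calcx: `ℓ₁ = 1`, `ℓ₂ = ℓ`, `ℓ ∤ ad + 1`. -/
theorem stmt10 (N : ℕ) (hN : 0 < N) (ℓ : ℕ) (hℓ : ℓ.Prime) (hℓN : ¬ ℓ ∣ N)
    (d : ℕ) (hd : 0 < d) (hdvd : d ∣ N) (hgcd : Nat.gcd d (N / d) = 1)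
    (ℓ₃ a b c : ℤ) (h3 : ℓ₃ = 1 ∨ ℓ₃ = (ℓ : ℤ)) (hnd : ¬ (ℓ : ℤ) ∣ (a * (d : ℤ) + 1)) :
    ∃ A B C D : ℤ, ∃ x : Matrix (Fin 3) (Fin 3) ℤ,
      (!![A, B, 0; C, D, 0; 0, 0, 1] : Matrix (Fin 3) (Fin 3) ℤ) ∈ Gamma03 N ∧
      x = conj3 (d : ℤ)
        (!![1, 0, 0; a, (ℓ : ℤ), 0; b, c, ℓ₃] * !![A, B, 0; C, D, 0; 0, 0, 1]) ∧
      x.det ≠ 0 ∧ (∀ j : Fin 3, j ≠ 0 → x 0 j = 0) ∧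
      x 0 0 = 1 ∧
      psi02 x = !![(ℓ : ℤ), 0;
        -b * (ℓ : ℤ) * (d : ℤ) + c * (a * (d : ℤ) + 1), ℓ₃] :=
  stmt10_general N ℓ hℓ hℓN d hdvd hgcd ℓ₃ a b c h3 hnd
end
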